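/- For an invertible matrix W W^T (with W having D columns w_1,...,w_D) and defining A_{-i} = W W^T - w_i w_i^T, if each A_{-i} is invertible then w_⊥^T W^T (W W^T)^{-1} = Σ_{i=1}^D (w_{⊥i} w_i^T A_{-i}^{-1}) / (1 + w_i^T A_{-i}^{-1} w_i). -/

import Mathlib

/-!
Write `M = W Wᵀ = A₋ᵢ + wᵢ wᵢᵀ` for each `i`. Sherman–Morrison applied to the row vector `wᵢᵀ`
gives `wᵢᵀ M⁻¹ = wᵢᵀ A₋ᵢ⁻¹ / (1 + wᵢᵀ A₋ᵢ⁻¹ wᵢ)`, since `(wᵢᵀ A₋ᵢ⁻¹) M = (1 + wᵢᵀ A₋ᵢ⁻¹ wᵢ) wᵢᵀ`.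
The left-hand side is linear in the columns: `(W w_⊥)ᵀ M⁻¹ = ∑ᵢ w_⊥ᵢ wᵢᵀ M⁻¹`.
-/

open Matrix

namespace Matrix

variable {K n : Type*} [Field K] [Fintype n] [DecidableEq n]

theorem vecMul_nonsing_inv_mul_add_vecMulVec {A : Matrix n n K} (hA : IsUnit A.det) (u v : n → K) :
    (v ᵥ* A⁻¹) ᵥ* (A + vecMulVec u v) = (1 + v ⬝ᵥ (A⁻¹ *ᵥ u)) • v := by
  rw [vecMul_add, vecMul_vecMul, nonsing_inv_mul _ hA, vecMul_one, vecMul_vecMulVec,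
    ← dotProduct_mulVec, add_smul, one_smul]

theorem vecMul_inv_add_vecMulVec {A : Matrix n n K} (hA : IsUnit A.det) {u v : n → K}
    (hAuv : IsUnit (A + vecMulVec u v).det) :
    v ᵥ* (A + vecMulVec u v)⁻¹ = (1 + v ⬝ᵥ (A⁻¹ *ᵥ u))⁻¹ • (v ᵥ* A⁻¹) := by
  set c := v ⬝ᵥ (A⁻¹ *ᵥ u) with hc
  have hvA : v ᵥ* A⁻¹ = (1 + c) • (v ᵥ* (A + vecMulVec u v)⁻¹) := by
    rw [← smul_vecMul, ← vecMul_nonsing_inv_mul_add_vecMulVec hA, vecMul_vecMul,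
      mul_nonsing_inv _ hAuv, vecMul_one]
  have hc_ne : 1 + c ≠ 0 := by
    intro h
    have hvA_zero : v ᵥ* A⁻¹ = 0 := by rw [hvA, h, zero_smul]
    have hc_zero : c = 0 := by rw [hc, dotProduct_mulVec, hvA_zero, zero_dotProduct]
    simp [hc_zero] at h
  rw [hvA, smul_smul, inv_mul_cancel₀ hc_ne, one_smul]

end Matrix

theorem sherman_morrison_expansion {N D : ℕ}
    (W : Matrix (Fin N) (Fin D) ℝ) (wperp : Fin D → ℝ)
    (hWW : IsUnit (W * Wᵀ).det)
    (A : Fin D → Matrix (Fin N) (Fin N) ℝ)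
    (hA : ∀ i, A i = W * Wᵀ - vecMulVec (fun n => W n i) (fun n => W n i))
    (hAinv : ∀ i, IsUnit (A i).det) :
    (W *ᵥ wperp) ᵥ* (W * Wᵀ)⁻¹
      = ∑ i, (wperp i / (1 + (fun n => W n i) ⬝ᵥ ((A i)⁻¹ *ᵥ (fun n => W n i))))
          • ((fun n => W n i) ᵥ* (A i)⁻¹) := by
  have hsplit : ∀ i, W * Wᵀ = A i + vecMulVec (fun n => W n i) (fun n => W n i) := fun i => by
    rw [hA i, sub_add_cancel]
  calc (W *ᵥ wperp) ᵥ* (W * Wᵀ)⁻¹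
      = ∑ i, wperp i • ((fun n => W n i) ᵥ* (W * Wᵀ)⁻¹) := by
        simp only [mulVec_eq_sum, op_smul_eq_smul, sum_vecMul, smul_vecMul]
        rfl
    _ = _ := by
        refine Finset.sum_congr rfl fun i _ => ?_
        rw [hsplit i, vecMul_inv_add_vecMulVec (hAinv i) (hsplit i ▸ hWW), smul_smul,
          div_eq_mul_inv]
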